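/- arXiv:1311.2009 — 2 statements merged into one kernel-verified Lean document; each statement's English description precedes it below -/
import Mathlib

section
/- (Faĭbusovich) Let the LQ system be controllable. Then there exists a Lagrangian subspace Λ ⊆ ℝ^{2n} such that zᵀ·ℍ·z > 0 for every z ∈ Λ with z ≠ 0 (the Hamiltonian is positive definite on Λ). -/
open Matrix

/-- The standard symplectic matrix `Ω = [[0, I],[−I, 0]]` on `ℝ^{2n}`. -/
noncomputable def Omega (n : ℕ) : Matrix (Fin n ⊕ Fin n) (Fin n ⊕ Fin n) ℝ :=
  Matrix.fromBlocks 0 1 (-1) 0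

/-- The Hamiltonian matrix `ℍ = [[B Bᵀ, A],[Aᵀ, Q]]` of the LQ problem. -/
noncomputable def HMat {n k : ℕ} (A Q : Matrix (Fin n) (Fin n) ℝ)
    (B : Matrix (Fin n) (Fin k) ℝ) : Matrix (Fin n ⊕ Fin n) (Fin n ⊕ Fin n) ℝ :=
  Matrix.fromBlocks (B * Bᵀ) A Aᵀ Q

/-- The Kalman matrix `[B, AB, …, A^{n−1}B]`. -/
noncomputable def Kalman {n k : ℕ} (A : Matrix (Fin n) (Fin n) ℝ)
    (B : Matrix (Fin n) (Fin k) ℝ) : Matrix (Fin n) (Fin n × Fin k) ℝ :=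
  Matrix.of fun i jl => (A ^ (jl.1 : ℕ) * B) i jl.2

/-- Controllability of the LQ system: the Kalman matrix has full rank. -/
def Controllable {n k : ℕ} (A : Matrix (Fin n) (Fin n) ℝ)
    (B : Matrix (Fin n) (Fin k) ℝ) : Prop :=
  (Kalman A B).rank = n

/-- `t` is a conjugate time: some nonzero vertical vector `(p,0)` is mapped by the
Hamiltonian flow `exp(t Ω ℍ)` back into the vertical subspace `𝒱 = {(p,0)}`. -/
def IsConjugateTime {n k : ℕ} (A Q : Matrix (Fin n) (Fin n) ℝ)
    (B : Matrix (Fin n) (Fin k) ℝ) (t : ℝ) : Prop :=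
  ∃ p : Fin n → ℝ, p ≠ 0 ∧
    ∀ i : Fin n,
      (NormedSpace.exp (t • (Omega n * HMat A Q B))).mulVec (Sum.elim p 0) (Sum.inr i) = 0

/-!
Take for `Λ` the graph `{(x, S x)}` of a symmetric matrix `S`: it is Lagrangian, and on it the
Hamiltonian is the quadratic form of `B Bᵀ + A S + S Aᵀ + S Q S`. Replacing `S` by `ε S` with `ε`
small makes the term `S Q S` negligible, so it suffices to find `S` for which
`B Bᵀ + A S + S Aᵀ` is positive definite. If there were none, a Hahn–Banach functional separating
the affine family `B Bᵀ + A S + S Aᵀ` from the open cone of positive definite forms would produce a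
nonzero positive semidefinite `P` with `P B = 0` and `P A = -Aᵀ P`. Then `P Aʲ B = 0` for all `j`,
so `P` annihilates the Kalman matrix, and controllability forces `P = 0`.
-/

open Filter Topology

lemma nonpos_of_forall_nonneg_mul_le {d u : ℝ} (h : ∀ t : ℝ, 0 ≤ t → t * d ≤ u) : d ≤ 0 := by
  by_contra! hd
  have := h ((|u| + 1) / d) (by positivity)
  rw [div_mul_cancel₀ _ hd.ne'] at this
  linarith [le_abs_self u]

lemma eq_zero_of_forall_le_add_mul {a b d : ℝ} (h : ∀ t : ℝ, a ≤ b + t * d) : d = 0 := by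
  refine le_antisymm (nonpos_of_forall_nonneg_mul_le (u := b - a) fun t _ => ?_)
    (neg_nonpos.mp (nonpos_of_forall_nonneg_mul_le (u := b - a) fun t _ => ?_))
  · linarith [h (-t)]
  · linarith [h t]

namespace Matrix

variable {ι : Type*} [Fintype ι]

/-- Positivity of the quadratic form alone, with no symmetry required: unlike `PosDef`, this
condition defines an open subset of the space of all matrices. -/
def PosQuadForm (M : Matrix ι ι ℝ) : Prop :=
  ∀ x : ι → ℝ, x ≠ 0 → 0 < x ⬝ᵥ M *ᵥ x

lemma dotProduct_transpose_mulVec_self {R : Type*} [CommSemiring R] (M : Matrix ι ι R)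
    (x : ι → R) : x ⬝ᵥ Mᵀ *ᵥ x = x ⬝ᵥ M *ᵥ x := by
  rw [mulVec_transpose, dotProduct_comm, dotProduct_mulVec]

lemma dotProduct_mulVec_of_transpose_eq {R : Type*} [CommSemiring R] {S : Matrix ι ι R}
    (hS : Sᵀ = S) (x y : ι → R) : x ⬝ᵥ S *ᵥ y = S *ᵥ x ⬝ᵥ y := by
  rw [dotProduct_mulVec, ← mulVec_transpose, hS]

namespace PosQuadForm

variable {M N : Matrix ι ι ℝ}

lemma smul (hM : PosQuadForm M) {c : ℝ} (hc : 0 < c) : PosQuadForm (c • M) := fun x hx => by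
  simpa [smul_mulVec, dotProduct_smul] using mul_pos hc (hM x hx)

lemma transpose (hM : PosQuadForm M) : PosQuadForm Mᵀ := fun x hx => by
  simpa [dotProduct_transpose_mulVec_self] using hM x hx

lemma add_posSemidef (hM : PosQuadForm M) (hN : N.PosSemidef) : PosQuadForm (M + N) :=
  fun x hx => by
    simpa [add_mulVec, dotProduct_add] using
      add_pos_of_pos_of_nonneg (hM x hx) (hN.dotProduct_mulVec_nonneg x)

end PosQuadForm

lemma posQuadForm_one [DecidableEq ι] : PosQuadForm (1 : Matrix ι ι ℝ) := fun x hx => by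
  simpa using dotProduct_self_star_pos_iff.mpr hx

lemma posQuadForm_iff_sphere {M : Matrix ι ι ℝ} :
    PosQuadForm M ↔ ∀ x ∈ Metric.sphere (0 : ι → ℝ) 1, 0 < x ⬝ᵥ M *ᵥ x := by
  refine ⟨fun hM x hx => hM x (ne_zero_of_mem_unit_sphere ⟨x, hx⟩ ), fun h x hx => ?_⟩
  have hnorm : ‖x‖ ≠ 0 := norm_ne_zero_iff.mpr hx
  have := h (‖x‖⁻¹ • x) (by simp [norm_smul, hnorm])
  simp only [mulVec_smul, dotProduct_smul, smul_dotProduct, smul_eq_mul] at this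
  exact pos_of_mul_pos_right (pos_of_mul_pos_right this (by positivity)) (by positivity)

lemma convex_setOf_posQuadForm : Convex ℝ {M : Matrix ι ι ℝ | PosQuadForm M} := by
  refine convex_iff_forall_pos.mpr fun M hM N hN a b ha hb _ x hx => ?_
  simpa [add_mulVec, smul_mulVec, dotProduct_add, dotProduct_smul] using
    add_pos (mul_pos ha (hM x hx)) (mul_pos hb (hN x hx))

lemma isOpen_setOf_posQuadForm : IsOpen {M : Matrix ι ι ℝ | PosQuadForm M} := by
  simp_rw [isOpen_iff_eventually, Set.mem_ofPred_eq, posQuadForm_iff_sphere]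
  intro M hM
  refine (isCompact_sphere 0 1).eventually_forall_of_forall_eventually fun x hx => ?_
  have hcont : Continuous fun p : Matrix ι ι ℝ × (ι → ℝ) => p.2 ⬝ᵥ p.1 *ᵥ p.2 :=
    continuous_snd.dotProduct (continuous_fst.matrix_mulVec continuous_snd)
  exact continuousAt_const.eventually_lt hcont.continuousAt (hM x hx)

lemma PosQuadForm.exists_add_smul {M : Matrix ι ι ℝ} (hM : PosQuadForm M)
    (N : Matrix ι ι ℝ) : ∃ ε ∈ Set.Ioo (0 : ℝ) 1, PosQuadForm (M + ε • N) := by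
  have hcont : Continuous fun ε : ℝ => M + ε • N := by fun_prop
  have hev : ∀ᶠ ε : ℝ in 𝓝 0, PosQuadForm (M + ε • N) :=
    (hcont.tendsto' 0 M (by simp)).eventually_mem (isOpen_setOf_posQuadForm.mem_nhds hM)
  have hIoo : ∀ᶠ ε : ℝ in 𝓝[>] 0, ε ∈ Set.Ioo 0 1 := Ioo_mem_nhdsGT zero_lt_one
  exact (hIoo.and (hev.filter_mono nhdsWithin_le_nhds)).exists

lemma exists_eq_trace_mul {m n R : Type*} [Fintype m] [Fintype n] [DecidableEq m]
    [DecidableEq n] [CommSemiring R] (f : Matrix m n R →ₗ[R] R) :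
    ∃ G : Matrix n m R, ∀ X, f X = (G * X).trace := by
  refine ⟨of fun j i => f (single i j 1), fun X => ?_⟩
  have hsingle (i : m) (j : n) : f (single i j (X i j)) = X i j * f (single i j 1) := by
    rw [← smul_eq_mul, ← map_smul, smul_single, smul_eq_mul, mul_one]
  conv_lhs => rw [matrix_eq_sum_single X]
  simp only [map_sum, hsingle, trace, diag, mul_apply, of_apply]
  rw [Finset.sum_comm]
  simp only [mul_comm]

open scoped ComplexOrder in
lemma PosSemidef.trace_conjTranspose_mul_mul_eq_zero_iff {𝕜 m n : Type*} [RCLike 𝕜]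
    [Fintype m] [Fintype n] {P : Matrix n n 𝕜} (hP : P.PosSemidef) (B : Matrix n m 𝕜) :
    (Bᴴ * P * B).trace = 0 ↔ P * B = 0 := by
  refine ⟨fun h => ?_, fun h => by rw [Matrix.mul_assoc, h, Matrix.mul_zero, trace_zero]⟩
  rw [(hP.conjTranspose_mul_mul_same B).trace_eq_zero_iff] at h
  refine ext_iff_mulVec.mpr fun v => ?_
  have hv : star (B *ᵥ v) ⬝ᵥ P *ᵥ (B *ᵥ v) = 0 := by
    simpa [star_mulVec, dotProduct_mulVec, vecMul_vecMul, Matrix.mul_assoc, mulVec_mulVec,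
      ← dotProduct_mulVec] using congrArg (star v ⬝ᵥ · *ᵥ v) h
  rw [← mulVec_mulVec, (hP.dotProduct_mulVec_zero_iff _).mp hv, zero_mulVec]

variable {κ : Type*} [Fintype κ]

lemma posSemidef_mul_transpose_self (B : Matrix ι κ ℝ) : (B * Bᵀ).PosSemidef := by
  simpa using posSemidef_self_mul_conjTranspose B

variable [DecidableEq ι]

lemma PosSemidef.mem_closure_setOf_posQuadForm {N : Matrix ι ι ℝ} (hN : N.PosSemidef) :
    N ∈ closure {M : Matrix ι ι ℝ | PosQuadForm M} := by
  have hlim : Tendsto (fun ε : ℝ => N + ε • 1) (𝓝[>] 0) (𝓝 N) := by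
    refine tendsto_nhdsWithin_of_tendsto_nhds ?_
    exact (by fun_prop : Continuous fun ε : ℝ => N + ε • (1 : Matrix ι ι ℝ)).tendsto' 0 N
      (by simp)
  refine mem_closure_of_tendsto hlim (eventually_nhdsWithin_of_forall fun ε hε => ?_)
  simpa [add_comm] using (posQuadForm_one.smul hε).add_posSemidef hN

lemma exists_functional_of_forall_not_posQuadForm {A : Matrix ι ι ℝ} {B : Matrix ι κ ℝ}
    (h : ∀ S, ¬ PosQuadForm (B * Bᵀ + (A * S + S * Aᵀ))) :
    ∃ f : Matrix ι ι ℝ →L[ℝ] ℝ, f 1 < 0 ∧ f (B * Bᵀ) = 0 ∧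
      (∀ S, f (A * S + S * Aᵀ) = 0) ∧ ∀ N : Matrix ι ι ℝ, N.PosSemidef → f N ≤ 0 := by
  set T := Set.range fun S => B * Bᵀ + (A * S + S * Aᵀ)
  have hconv : Convex ℝ T := by
    rintro _ ⟨S₁, rfl⟩ _ ⟨S₂, rfl⟩ a b - - hab
    refine ⟨a • S₁ + b • S₂, ?_⟩
    simp only [Matrix.mul_add, Matrix.add_mul, Matrix.mul_smul, Matrix.smul_mul]
    rw [eq_sub_of_add_eq hab]
    module
  have hdisj : Disjoint {M : Matrix ι ι ℝ | PosQuadForm M} T := by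
    rw [Set.disjoint_left]
    rintro M hM ⟨S, rfl⟩
    exact h S hM
  obtain ⟨f, u, hlt, hle⟩ :=
    geometric_hahn_banach_open convex_setOf_posQuadForm isOpen_setOf_posQuadForm hconv hdisj
  have hline (S : Matrix ι ι ℝ) (t : ℝ) : u ≤ f (B * Bᵀ) + t * f (A * S + S * Aᵀ) := by
    simpa [Matrix.mul_smul, Matrix.smul_mul, ← smul_add] using hle _ ⟨t • S, rfl⟩
  have hpsd_le (N : Matrix ι ι ℝ) (hN : N.PosSemidef) : f N ≤ u :=
    closure_lt_subset_le f.continuous continuous_const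
      (closure_mono (fun M hM => hlt M hM) hN.mem_closure_setOf_posQuadForm)
  have hpsd (N : Matrix ι ι ℝ) (hN : N.PosSemidef) : f N ≤ 0 :=
    nonpos_of_forall_nonneg_mul_le fun t ht => by simpa using hpsd_le (t • N) (hN.smul ht)
  have hu : 0 ≤ u := by simpa using hpsd_le 0 .zero
  have hBB : u ≤ f (B * Bᵀ) := by simpa using hline 0 0
  have hBB' := hpsd _ (posSemidef_mul_transpose_self B)
  exact ⟨f, by linarith [hlt 1 posQuadForm_one], le_antisymm hBB' (hu.trans hBB),
    fun S => eq_zero_of_forall_le_add_mul (hline S), hpsd⟩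

lemma exists_posSemidef_of_forall_not_posQuadForm {A : Matrix ι ι ℝ} {B : Matrix ι κ ℝ}
    (h : ∀ S, ¬ PosQuadForm (B * Bᵀ + (A * S + S * Aᵀ))) :
    ∃ P : Matrix ι ι ℝ, P.PosSemidef ∧ P ≠ 0 ∧ P * B = 0 ∧ P * A = -Aᵀ * P := by
  obtain ⟨f, hf1, hfBB, hfL, hfpsd⟩ := exists_functional_of_forall_not_posQuadForm h
  obtain ⟨G, hG⟩ := exists_eq_trace_mul f.toLinearMap
  simp only [ContinuousLinearMap.coe_coe] at hG
  simp only [hG, Matrix.mul_one] at hf1 hfBB hfL hfpsd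
  have hLyap : G * A + Aᵀ * G = 0 := ext_iff_trace_mul_right.mpr fun S => by
    have hcycle : (G * (S * Aᵀ)).trace = (Aᵀ * (G * S)).trace := by
      rw [← Matrix.mul_assoc, trace_mul_comm]
    have := hfL S
    rw [Matrix.mul_add, trace_add, hcycle] at this
    rw [Matrix.zero_mul, trace_zero, Matrix.add_mul, trace_add, Matrix.mul_assoc,
      Matrix.mul_assoc, this]
  have hform (x : ι → ℝ) : x ⬝ᵥ G *ᵥ x ≤ 0 := by
    have := hfpsd _ (by simpa using posSemidef_vecMulVec_self_star x)
    rwa [mul_vecMulVec, trace_vecMulVec, dotProduct_comm] at this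
  -- `G` represents `f` but need not be symmetric; `f` only sees its symmetric part.
  set P := -(G + Gᵀ)
  have hP : P.PosSemidef := by
    refine .of_dotProduct_mulVec_nonneg ?_ fun x => ?_
    · simp [P, IsHermitian, add_comm]
    · simp only [P, star_trivial, neg_mulVec, add_mulVec, dotProduct_neg, dotProduct_add,
        dotProduct_transpose_mulVec_self]
      linarith [hform x]
  refine ⟨P, hP, fun hP0 => ?_, ?_, ?_⟩
  · have := congrArg trace hP0
    simp only [P, trace_neg, trace_add, trace_transpose, trace_zero] at this
    linarith
  · refine (hP.trace_conjTranspose_mul_mul_eq_zero_iff B).mp ?_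
    have hGt : (Gᵀ * (B * Bᵀ)).trace = (G * (B * Bᵀ)).trace := by
      rw [← trace_transpose, transpose_mul, transpose_mul, transpose_transpose, transpose_transpose,
        trace_mul_comm]
    rw [conjTranspose_eq_transpose_of_trivial, trace_mul_cycle, trace_mul_comm]
    simp [P, Matrix.add_mul, trace_add, hGt, hfBB]
  · have hLyapT := congrArg transpose hLyap
    simp only [transpose_add, transpose_mul, transpose_transpose, transpose_zero] at hLyapT
    calc P * A = -(G * A + Aᵀ * G) - (Aᵀ * Gᵀ + Gᵀ * A) - Aᵀ * P := by
          simp only [P]; noncomm_ring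
      _ = -Aᵀ * P := by rw [hLyap, hLyapT]; noncomm_ring

end Matrix

section Controllability

variable {n k : ℕ} {A : Matrix (Fin n) (Fin n) ℝ} {B : Matrix (Fin n) (Fin k) ℝ}

lemma mul_kalman_eq_zero {m : Type*} [Fintype m] [DecidableEq m] {P : Matrix m (Fin n) ℝ}
    {C : Matrix m m ℝ} (hA : P * A = C * P) (hB : P * B = 0) : P * Kalman A B = 0 := by
  have hpow (j : ℕ) : P * A ^ j = C ^ j * P := by
    induction j with
    | zero => simp
    | succ j ih => rw [pow_succ, ← Matrix.mul_assoc, ih, Matrix.mul_assoc, hA,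
        ← Matrix.mul_assoc, ← pow_succ]
  ext i jl
  have hcol : P * (A ^ (jl.1 : ℕ) * B) = 0 := by
    rw [← Matrix.mul_assoc, hpow, Matrix.mul_assoc, hB, Matrix.mul_zero]
  simpa [Kalman, mul_apply] using congr_fun₂ hcol i jl.2

lemma Controllable.eq_zero_of_mul_kalman_eq_zero {m : Type*} (hctrl : Controllable A B)
    {P : Matrix m (Fin n) ℝ} (h : P * Kalman A B = 0) : P = 0 := by
  have hrange : LinearMap.range (Kalman A B).mulVecLin = ⊤ :=
    Submodule.eq_top_of_finrank_eq (by rw [Module.finrank_fin_fun]; exact hctrl)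
  refine ext_iff_mulVec.mpr fun v => ?_
  obtain ⟨c, rfl⟩ := LinearMap.range_eq_top.mp hrange v
  simp [mulVec_mulVec, h]

lemma Controllable.exists_posQuadForm_lyapunov (hctrl : Controllable A B) :
    ∃ S : Matrix (Fin n) (Fin n) ℝ, Sᵀ = S ∧ PosQuadForm (B * Bᵀ + (A * S + S * Aᵀ)) := by
  obtain ⟨S, hS⟩ : ∃ S, PosQuadForm (B * Bᵀ + (A * S + S * Aᵀ)) := by
    by_contra! h
    obtain ⟨P, -, hP0, hPB, hPA⟩ := exists_posSemidef_of_forall_not_posQuadForm h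
    exact hP0 (hctrl.eq_zero_of_mul_kalman_eq_zero (mul_kalman_eq_zero hPA hPB))
  refine ⟨(1 / 2 : ℝ) • (S + Sᵀ), by rw [transpose_smul, transpose_add, transpose_transpose,
    add_comm], ?_⟩
  have hmid := convex_setOf_posQuadForm hS hS.transpose (by norm_num : (0 : ℝ) ≤ 1 / 2)
    (by norm_num : (0 : ℝ) ≤ 1 / 2) (by norm_num)
  have hsymm : (B * Bᵀ)ᵀ = B * Bᵀ := by rw [transpose_mul, transpose_transpose]
  rw [transpose_add, hsymm, transpose_add, transpose_mul, transpose_mul, transpose_transpose]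
    at hmid
  convert (show PosQuadForm _ from hmid) using 1
  simp only [Matrix.mul_add, Matrix.add_mul, Matrix.mul_smul, Matrix.smul_mul]
  module

lemma Controllable.exists_posQuadForm_riccati (hctrl : Controllable A B)
    (Q : Matrix (Fin n) (Fin n) ℝ) :
    ∃ S : Matrix (Fin n) (Fin n) ℝ, Sᵀ = S ∧
      PosQuadForm (B * Bᵀ + (A * S + S * Aᵀ) + S * Q * S) := by
  obtain ⟨S, hSsymm, hS⟩ := hctrl.exists_posQuadForm_lyapunov
  obtain ⟨ε, ⟨hε0, hε1⟩, hεS⟩ := hS.exists_add_smul (S * Q * S)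
  refine ⟨ε • S, by rw [transpose_smul, hSsymm], ?_⟩
  have hsplit : B * Bᵀ + (A * (ε • S) + ε • S * Aᵀ) + ε • S * Q * (ε • S) =
      ε • (B * Bᵀ + (A * S + S * Aᵀ) + ε • (S * Q * S)) + (1 - ε) • (B * Bᵀ) := by
    simp only [Matrix.mul_smul, Matrix.smul_mul]
    module
  rw [hsplit]
  exact (hεS.smul hε0).add_posSemidef ((posSemidef_mul_transpose_self B).smul (by linarith))

end Controllability

section Graph

variable {ι R : Type*} [Fintype ι] [CommSemiring R]

def graphMap (S : Matrix ι ι R) : (ι → R) →ₗ[R] (ι ⊕ ι → R) :=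
  (LinearEquiv.sumArrowLequivProdArrow ι ι R R).symm.toLinearMap ∘ₗ
    LinearMap.id.prod S.mulVecLin

@[simp]
lemma graphMap_apply (S : Matrix ι ι R) (x : ι → R) : graphMap S x = Sum.elim x (S *ᵥ x) := by
  ext (i | i) <;> simp [graphMap]

lemma graphMap_injective (S : Matrix ι ι R) : Function.Injective (graphMap S) :=
  fun x y h => by simpa using congrArg (· ∘ Sum.inl) h

variable {n k : ℕ}

lemma Omega_mulVec_sumElim (p q : Fin n → ℝ) : Omega n *ᵥ Sum.elim p q = Sum.elim q (-p) := by
  simp [Omega, fromBlocks_mulVec, neg_mulVec]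

lemma graph_dotProduct_Omega_mulVec_graph {S : Matrix (Fin n) (Fin n) ℝ} (hS : Sᵀ = S)
    (x y : Fin n → ℝ) : Sum.elim x (S *ᵥ x) ⬝ᵥ Omega n *ᵥ Sum.elim y (S *ᵥ y) = 0 := by
  rw [Omega_mulVec_sumElim, sumElim_dotProduct_sumElim, dotProduct_neg,
    dotProduct_mulVec_of_transpose_eq hS, add_neg_cancel]

lemma graph_dotProduct_HMat_mulVec_graph (A Q : Matrix (Fin n) (Fin n) ℝ)
    (B : Matrix (Fin n) (Fin k) ℝ) {S : Matrix (Fin n) (Fin n) ℝ} (hS : Sᵀ = S) (x : Fin n → ℝ) :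
    Sum.elim x (S *ᵥ x) ⬝ᵥ HMat A Q B *ᵥ Sum.elim x (S *ᵥ x) =
      x ⬝ᵥ (B * Bᵀ + (A * S + S * Aᵀ) + S * Q * S) *ᵥ x := by
  have hself (M : Matrix (Fin n) (Fin n) ℝ) (y : Fin n → ℝ) :
      S *ᵥ x ⬝ᵥ M *ᵥ y = x ⬝ᵥ (S * M) *ᵥ y := by
    rw [← dotProduct_mulVec_of_transpose_eq hS, mulVec_mulVec]
  rw [HMat, fromBlocks_mulVec]
  simp only [Sum.elim_comp_inl, Sum.elim_comp_inr, sumElim_dotProduct_sumElim, dotProduct_add,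
    hself, add_mulVec, mulVec_mulVec, Matrix.mul_assoc]
  ring

end Graph

theorem exists_positive_lagrangian_of_controllable_general {n k : ℕ}
    (A Q : Matrix (Fin n) (Fin n) ℝ) (B : Matrix (Fin n) (Fin k) ℝ)
    (hctrl : Controllable A B) :
    ∃ Λ : Submodule ℝ (Fin n ⊕ Fin n → ℝ),
      Module.finrank ℝ Λ = n ∧
      (∀ u ∈ Λ, ∀ v ∈ Λ, u ⬝ᵥ (Omega n).mulVec v = 0) ∧
      (∀ z ∈ Λ, z ≠ 0 → 0 < z ⬝ᵥ (HMat A Q B).mulVec z) := by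
  obtain ⟨S, hSsymm, hS⟩ := hctrl.exists_posQuadForm_riccati Q
  refine ⟨LinearMap.range (graphMap S), ?_, ?_, ?_⟩
  · rw [LinearMap.finrank_range_of_inj (graphMap_injective S), Module.finrank_fin_fun]
  · rintro _ ⟨x, rfl⟩ _ ⟨y, rfl⟩
    simpa using graph_dotProduct_Omega_mulVec_graph hSsymm x y
  · rintro _ ⟨x, rfl⟩ hz
    rw [graphMap_apply, graph_dotProduct_HMat_mulVec_graph A Q B hSsymm]
    exact hS x fun hx => hz (by rw [hx, map_zero])

theorem exists_positive_lagrangian_of_controllable {n k : ℕ}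
    (hn : 1 ≤ n) (hk : 1 ≤ k)
    (A Q : Matrix (Fin n) (Fin n) ℝ) (hQ : Q.IsSymm) (B : Matrix (Fin n) (Fin k) ℝ)
    (hctrl : Controllable A B) :
    ∃ Λ : Submodule ℝ (Fin n ⊕ Fin n → ℝ),
      Module.finrank ℝ Λ = n ∧
      (∀ u ∈ Λ, ∀ v ∈ Λ, u ⬝ᵥ (Omega n).mulVec v = 0) ∧
      (∀ z ∈ Λ, z ≠ 0 → 0 < z ⬝ᵥ (HMat A Q B).mulVec z) :=
  exists_positive_lagrangian_of_controllable_general A Q B hctrl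
end

section
/- Write exp(t·Ω·ℍ) in n×n blocks as [[φ₁₁(t), φ₁₂(t)],[φ₂₁(t), φ₂₂(t)]], and for t in a neighborhood of 0 (where φ₁₁(t) is invertible, since φ₁₁(0) = I) set S(t) = φ₂₁(t)·φ₁₁(t)^{−1}. Then the LQ system is controllable, i.e. rank[B, AB, …, A^{n−1}B] = n, if and only if there exists an integer N ≥ 1 such that for every p ∈ ℝⁿ, p ≠ 0, there is some i with 1 ≤ i ≤ N and S^{(i)}(0)·p ≠ 0 (i.e. the Jacobi curve is ample at 0: rank{S'(0), S''(0), …, S^{(N)}(0)} = n). -/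
/-!
Write `M = Ω ℍ = [[Aᵀ, Q], [-B Bᵀ, -A]]`; the `m`-th derivatives at `0` of `φ₁₁` and `φ₂₁` are the
blocks `(Mᵐ)₁₁` and `(Mᵐ)₂₁`. Since `ℍ` is symmetric, `exp (t M)` is symplectic, which makes every
`S t` symmetric, so `S⁽ⁱ⁾(0) p = 0` iff `pᵀ S⁽ⁱ⁾(0) = 0`. Differentiating `φ₂₁ = S φ₁₁` at `0` by
Leibniz's rule, with `S 0 = 0` and `φ₁₁ 0 = 1`, gives a triangular system: `pᵀ S⁽ⁱ⁾(0) = 0` for all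
`i ≤ N` iff `pᵀ (Mᵐ)₂₁ = 0` for all `m ≤ N`. Following the row vector `(0, pᵀ) Mᵐ` block by block,
this holds iff `pᵀ Aᵐ B Bᵀ = 0`, i.e. `pᵀ Aᵐ B = 0`, for all `m < N`. So ampleness with a given `N`
says that no `p ≠ 0` annihilates `B, A B, …, A^{N-1} B`, and by Cayley–Hamilton the powers `m < n`
already decide this.
-/

open Matrix

/-- The upper-left `n×n` block `φ₁₁(t)` of the flow `exp(t Ω ℍ)`. -/
noncomputable def phi11 {n k : ℕ} (A Q : Matrix (Fin n) (Fin n) ℝ)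
    (B : Matrix (Fin n) (Fin k) ℝ) (t : ℝ) : Matrix (Fin n) (Fin n) ℝ :=
  Matrix.of fun i j =>
    (NormedSpace.exp (t • (Omega n * HMat A Q B))) (Sum.inl i) (Sum.inl j)

/-- The lower-left `n×n` block `φ₂₁(t)` of the flow `exp(t Ω ℍ)`. -/
noncomputable def phi21 {n k : ℕ} (A Q : Matrix (Fin n) (Fin n) ℝ)
    (B : Matrix (Fin n) (Fin k) ℝ) (t : ℝ) : Matrix (Fin n) (Fin n) ℝ :=
  Matrix.of fun i j =>
    (NormedSpace.exp (t • (Omega n * HMat A Q B))) (Sum.inr i) (Sum.inl j)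


open NormedSpace Topology
open scoped ContDiff

section Calculus

theorem ContinuousLinearMap.iteratedDeriv_comp_left {F G : Type*} [NormedAddCommGroup F]
    [NormedSpace ℝ F] [NormedAddCommGroup G] [NormedSpace ℝ G] {f : ℝ → F} {x : ℝ} {m : ℕ}
    (L : F →L[ℝ] G) (hf : ContDiffAt ℝ m f x) :
    iteratedDeriv m (L ∘ f) x = L (iteratedDeriv m f x) := by
  simp [iteratedDeriv_eq_iteratedFDeriv, L.iteratedFDeriv_comp_left hf le_rfl]

variable {𝔸 : Type*} [NormedRing 𝔸] [NormedAlgebra ℝ 𝔸] [CompleteSpace 𝔸]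

theorem iteratedDeriv_exp_smul (x : 𝔸) (m : ℕ) :
    iteratedDeriv m (fun t : ℝ => exp (t • x)) = fun t => x ^ m * exp (t • x) := by
  induction m with
  | zero => simp
  | succ m ih =>
    rw [iteratedDeriv_succ, ih]
    funext t
    rw [((hasDerivAt_exp_smul_const' x t).const_mul (x ^ m)).deriv, ← mul_assoc, pow_succ]

theorem contDiff_exp_smul (x : 𝔸) : ContDiff ℝ ∞ (fun t : ℝ => exp (t • x)) := by
  refine contDiff_of_differentiable_iteratedDeriv fun m _ => ?_
  rw [iteratedDeriv_exp_smul]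
  exact fun t => ((hasDerivAt_exp_smul_const' x t).const_mul _).differentiableAt

end Calculus

namespace Matrix

variable {ι : Type*} [Fintype ι]

theorem rank_eq_card_iff_vecMul_eq_zero {m K : Type*} [Fintype m] [Field K]
    (M : Matrix m ι K) : M.rank = Fintype.card m ↔ ∀ v, v ᵥ* M = 0 → v = 0 := by
  rw [rank_eq_finrank_span_row, ← Set.finrank, eq_comm,
    ← linearIndependent_iff_card_eq_finrank_span, Fintype.linearIndependent_iff]
  simp [vecMul_eq_sum, Matrix.row, funext_iff]

variable [DecidableEq ι]

theorem map_pow_eq_zero_of_forall_lt_card {R V : Type*} [CommRing R] [AddCommGroup V]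
    [Module R V] (A : Matrix ι ι R) (L : Matrix ι ι R →ₗ[R] V)
    (h : ∀ m < Fintype.card ι, L (A ^ m) = 0)
    (m : ℕ) : L (A ^ m) = 0 := by
  nontriviality R
  have hdeg : (Polynomial.X ^ m %ₘ A.charpoly).degree < Fintype.card ι := by
    rw [← charpoly_degree_eq_dim A]
    exact Polynomial.degree_modByMonic_lt _ (charpoly_monic A)
  rw [pow_eq_aeval_mod_charpoly, Polynomial.aeval_eq_sum_range, map_sum]
  refine Finset.sum_eq_zero fun i _ => ?_
  rw [map_smul]
  rcases lt_or_ge i (Fintype.card ι) with hi | hi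
  · rw [h i hi, smul_zero]
  · rw [Polynomial.coeff_eq_zero_of_degree_lt (hdeg.trans_le (by exact_mod_cast hi)), zero_smul]

theorem isSymm_mul_inv_of_transpose_mul_comm {R : Type*} [CommRing R] {F G : Matrix ι ι R}
    (h : Fᵀ * G = Gᵀ * F) : (G * F⁻¹).IsSymm := by
  by_cases hF : IsUnit F.det
  · have hFt : IsUnit Fᵀ.det := by rwa [det_transpose]
    calc (G * F⁻¹)ᵀ = (Fᵀ)⁻¹ * (Fᵀ * G) * F⁻¹ := by
          rw [transpose_mul, transpose_nonsing_inv, h, Matrix.mul_assoc, Matrix.mul_assoc,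
            mul_nonsing_inv _ hF, Matrix.mul_one]
      _ = G * F⁻¹ := by rw [← Matrix.mul_assoc, nonsing_inv_mul _ hFt, Matrix.one_mul]
  · simp [IsSymm, nonsing_inv_apply_not_isUnit _ hF]

theorem exp_transpose_mul_mul_exp {J X : Matrix ι ι ℝ} (hJ : IsUnit J)
    (hX : Xᵀ * J = -(J * X)) : (exp X)ᵀ * J * exp X = J := by
  have hXt : Xᵀ = J * (-X) * J⁻¹ := by
    rw [Matrix.mul_neg, ← hX, Matrix.mul_assoc,
      mul_nonsing_inv _ ((isUnit_iff_isUnit_det J).mp hJ), Matrix.mul_one]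
  rw [← exp_transpose, hXt, exp_conj _ _ hJ, exp_neg, Matrix.mul_assoc _ J⁻¹,
    nonsing_inv_mul _ ((isUnit_iff_isUnit_det J).mp hJ), Matrix.mul_one, Matrix.mul_assoc,
    nonsing_inv_mul _ ((isUnit_iff_isUnit_det _).mp (isUnit_exp X)), Matrix.mul_one]

end Matrix

theorem forall_le_eq_zero_iff_of_eq_sum_choose {ι R : Type*} [Fintype ι] [DecidableEq ι]
    [CommSemiring R] {c d : ℕ → ι → R} {E : ℕ → Matrix ι ι R} (hE : E 0 = 1)
    (hc : ∀ m, c m = ∑ j ∈ Finset.range (m + 1), m.choose j • d j ᵥ* E (m - j)) (N : ℕ) :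
    (∀ m ≤ N, c m = 0) ↔ ∀ m ≤ N, d m = 0 := by
  refine ⟨fun h => ?_, fun h m hm => ?_⟩
  · intro m
    induction m using Nat.strong_induction_on with
    | _ m ih =>
      intro hm
      have hcm := hc m
      rw [Finset.sum_range_succ, Finset.sum_eq_zero fun j hj => ?_, h m hm] at hcm
      · simpa [hE] using hcm.symm
      · rw [ih j (Finset.mem_range.mp hj) (by grind), zero_vecMul, smul_zero]
  · rw [hc m]
    exact Finset.sum_eq_zero fun j hj => by
      rw [h j (by grind), zero_vecMul, smul_zero]

section LQSystem

variable {n k : ℕ} (A Q : Matrix (Fin n) (Fin n) ℝ) (B : Matrix (Fin n) (Fin k) ℝ)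

theorem Omega_mul_HMat : Omega n * HMat A Q B = fromBlocks Aᵀ Q (-(B * Bᵀ)) (-A) := by
  simp [Omega, HMat, fromBlocks_multiply]

theorem Omega_mul_Omega : Omega n * Omega n = -1 := by
  simp [Omega, fromBlocks_multiply, ← fromBlocks_one, fromBlocks_neg]

theorem transpose_Omega : (Omega n)ᵀ = -Omega n := by
  simp [Omega, fromBlocks_transpose, fromBlocks_neg]

theorem isUnit_Omega : IsUnit (Omega n) :=
  IsUnit.of_mul_eq_one (-Omega n) (by rw [Matrix.mul_neg, Omega_mul_Omega, neg_neg])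

theorem isSymm_HMat (hQ : Q.IsSymm) : (HMat A Q B).IsSymm :=
  IsSymm.fromBlocks (by simp [IsSymm, Matrix.transpose_mul]) rfl hQ

theorem toBlocks₁₁_transpose_mul_Omega_mul (Φ : Matrix (Fin n ⊕ Fin n) (Fin n ⊕ Fin n) ℝ) :
    (Φᵀ * Omega n * Φ).toBlocks₁₁ =
      Φ.toBlocks₁₁ᵀ * Φ.toBlocks₂₁ - Φ.toBlocks₂₁ᵀ * Φ.toBlocks₁₁ := by
  conv_lhs => rw [← fromBlocks_toBlocks Φ]
  simp [Omega, fromBlocks_transpose, fromBlocks_multiply, sub_eq_add_neg, add_comm]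

theorem exp_transpose_mul_Omega_mul_exp (hQ : Q.IsSymm) (t : ℝ) :
    (exp (t • (Omega n * HMat A Q B)))ᵀ * Omega n * exp (t • (Omega n * HMat A Q B)) =
      Omega n := by
  refine exp_transpose_mul_mul_exp isUnit_Omega ?_
  rw [transpose_smul, transpose_mul, (isSymm_HMat A Q B hQ).eq, transpose_Omega, Matrix.smul_mul,
    Matrix.mul_assoc, Matrix.neg_mul, Omega_mul_Omega, Matrix.mul_smul, ← Matrix.mul_assoc,
    Omega_mul_Omega]
  simp

theorem transpose_phi11_mul_phi21 (hQ : Q.IsSymm) (t : ℝ) :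
    (phi11 A Q B t)ᵀ * phi21 A Q B t = (phi21 A Q B t)ᵀ * phi11 A Q B t := by
  have h := congrArg toBlocks₁₁ (exp_transpose_mul_Omega_mul_exp A Q B hQ t)
  rw [toBlocks₁₁_transpose_mul_Omega_mul] at h
  exact sub_eq_zero.mp (h.trans (by simp [Omega]))

/-- Where `φ₁₁ t` is singular, the junk inverse makes `S t = 0`; only the germ of `S` at `0`
enters the theorem. -/
noncomputable def jacobiCurve (t : ℝ) : Matrix (Fin n) (Fin n) ℝ :=
  phi21 A Q B t * (phi11 A Q B t)⁻¹

theorem isSymm_jacobiCurve (hQ : Q.IsSymm) (t : ℝ) : (jacobiCurve A Q B t).IsSymm :=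
  isSymm_mul_inv_of_transpose_mul_comm (transpose_phi11_mul_phi21 A Q B hQ t)

theorem vecMul_Kalman_eq_zero_iff (p : Fin n → ℝ) :
    p ᵥ* Kalman A B = 0 ↔ ∀ m < n, p ᵥ* (A ^ m * B) = 0 := by
  simp only [funext_iff, Prod.forall, Fin.forall_iff]
  rfl

theorem controllable_iff_forall_vecMul_pow_mul_eq_zero :
    Controllable A B ↔ ∀ p : Fin n → ℝ, (∀ m < n, p ᵥ* (A ^ m * B) = 0) → p = 0 := by
  simp only [Controllable, ← vecMul_Kalman_eq_zero_iff]
  simpa using rank_eq_card_iff_vecMul_eq_zero (Kalman A B)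

theorem vecMul_pow_mul_eq_zero_of_forall_lt {p : Fin n → ℝ}
    (h : ∀ m < n, p ᵥ* (A ^ m * B) = 0) (m : ℕ) : p ᵥ* (A ^ m * B) = 0 :=
  let L : Matrix (Fin n) (Fin n) ℝ →ₗ[ℝ] Fin k → ℝ :=
    { toFun X := p ᵥ* (X * B)
      map_add' X Y := by simp [Matrix.add_mul, vecMul_add]
      map_smul' c X := by simp [Matrix.smul_mul, vecMul_smul] }
  map_pow_eq_zero_of_forall_lt_card A L (by simpa [L] using h) m

theorem toBlocks₂₁_pow_succ (m : ℕ) :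
    ((Omega n * HMat A Q B) ^ (m + 1)).toBlocks₂₁ =
      ((Omega n * HMat A Q B) ^ m).toBlocks₂₁ * Aᵀ
        - ((Omega n * HMat A Q B) ^ m).toBlocks₂₂ * (B * Bᵀ) := by
  rw [pow_succ]
  generalize (Omega n * HMat A Q B) ^ m = Y
  rw [Omega_mul_HMat, ← fromBlocks_toBlocks Y]
  simp [fromBlocks_multiply, sub_eq_add_neg]

theorem toBlocks₂₂_pow_succ (m : ℕ) :
    ((Omega n * HMat A Q B) ^ (m + 1)).toBlocks₂₂ =
      ((Omega n * HMat A Q B) ^ m).toBlocks₂₁ * Q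
        - ((Omega n * HMat A Q B) ^ m).toBlocks₂₂ * A := by
  rw [pow_succ]
  generalize (Omega n * HMat A Q B) ^ m = Y
  rw [Omega_mul_HMat, ← fromBlocks_toBlocks Y]
  simp [fromBlocks_multiply, sub_eq_add_neg]

theorem vecMul_toBlocks₂₂_pow {p : Fin n → ℝ} {m : ℕ}
    (h : ∀ j < m, p ᵥ* ((Omega n * HMat A Q B) ^ j).toBlocks₂₁ = 0) :
    p ᵥ* ((Omega n * HMat A Q B) ^ m).toBlocks₂₂ = (-1 : ℝ) ^ m • (p ᵥ* A ^ m) := by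
  induction m with
  | zero => simp [← fromBlocks_one]
  | succ m ih =>
    rw [toBlocks₂₂_pow_succ, vecMul_sub, ← vecMul_vecMul, ← vecMul_vecMul, h m m.lt_succ_self,
      ih fun j hj => h j (hj.trans m.lt_succ_self), zero_vecMul, smul_vecMul, vecMul_vecMul,
      ← pow_succ, pow_succ (-1 : ℝ), mul_neg_one, neg_smul, zero_sub]

theorem forall_vecMul_toBlocks₂₁_pow_eq_zero_iff (p : Fin n → ℝ) (N : ℕ) :
    (∀ m ≤ N, p ᵥ* ((Omega n * HMat A Q B) ^ m).toBlocks₂₁ = 0) ↔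
      ∀ m < N, p ᵥ* (A ^ m * B) = 0 := by
  induction N with
  | zero => simp [← fromBlocks_one]
  | succ N ih =>
    simp only [← Nat.lt_succ_iff] at ih ⊢
    rw [Nat.forall_lt_succ_right (n := N), ← ih, Nat.forall_lt_succ_right (n := N + 1)]
    refine and_congr_right fun hc => ?_
    rw [toBlocks₂₁_pow_succ, vecMul_sub, ← vecMul_vecMul, hc N N.lt_succ_self, zero_vecMul,
      zero_sub, neg_eq_zero, ← vecMul_vecMul,
      vecMul_toBlocks₂₂_pow A Q B fun j hj => hc j (hj.trans N.lt_succ_self), smul_vecMul,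
      smul_eq_zero_iff_right (pow_ne_zero N (by norm_num)), ← conjTranspose_eq_transpose_of_trivial,
      vecMul_self_mul_conjTranspose_eq_zero, vecMul_vecMul]

end LQSystem

theorem isSymm_of_iteratedDeriv_apply {ι : Type*} {f : ℝ → Matrix ι ι ℝ}
    (hf : ∀ s, (f s).IsSymm) (i : ℕ) (x : ℝ) :
    (of fun a b => iteratedDeriv i (fun s => f s a b) x).IsSymm :=
  IsSymm.ext fun a b => by
    simp only [of_apply]
    congr 1
    funext s
    exact (hf s).apply a b

section JacobiCurveDerivatives

-- Derivatives of matrix-valued curves need a norm on matrices; any one gives the same derivatives.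
attribute [local instance] Matrix.linftyOpNormedAddCommGroup Matrix.linftyOpNormedSpace
  Matrix.linftyOpNormedRing Matrix.linftyOpNormedAlgebra

section Submatrix

variable {ι l o : Type*} [Fintype ι] [DecidableEq ι] [Fintype l] [Fintype o]

noncomputable def submatrixCLM (r : l → ι) (c : o → ι) : Matrix ι ι ℝ →L[ℝ] Matrix l o ℝ :=
  LinearMap.toContinuousLinearMap
    { toFun X := X.submatrix r c
      map_add' _ _ := rfl
      map_smul' _ _ := rfl }

theorem contDiff_submatrix_exp_smul (X : Matrix ι ι ℝ) (r : l → ι) (c : o → ι) :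
    ContDiff ℝ ∞ (fun t : ℝ => (exp (t • X)).submatrix r c) :=
  (submatrixCLM r c).contDiff.comp (contDiff_exp_smul X)

theorem iteratedDeriv_submatrix_exp_smul_zero (X : Matrix ι ι ℝ) (r : l → ι) (c : o → ι)
    (m : ℕ) :
    iteratedDeriv m (fun t : ℝ => (exp (t • X)).submatrix r c) 0 = (X ^ m).submatrix r c := by
  have h := (submatrixCLM r c).iteratedDeriv_comp_left
    ((contDiff_exp_smul X).contDiffAt.of_le (by exact_mod_cast le_top)) (m := m) (x := 0)
  simp only [Function.comp_def, iteratedDeriv_exp_smul, zero_smul, exp_zero, mul_one] at h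
  exact h

end Submatrix

variable {n k : ℕ} (A Q : Matrix (Fin n) (Fin n) ℝ) (B : Matrix (Fin n) (Fin k) ℝ)

theorem contDiff_phi11 : ContDiff ℝ ∞ (phi11 A Q B) :=
  contDiff_submatrix_exp_smul _ Sum.inl Sum.inl

theorem contDiff_phi21 : ContDiff ℝ ∞ (phi21 A Q B) :=
  contDiff_submatrix_exp_smul _ Sum.inr Sum.inl

theorem iteratedDeriv_phi11_zero (m : ℕ) :
    iteratedDeriv m (phi11 A Q B) 0 = ((Omega n * HMat A Q B) ^ m).toBlocks₁₁ :=
  iteratedDeriv_submatrix_exp_smul_zero _ Sum.inl Sum.inl m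

theorem iteratedDeriv_phi21_zero (m : ℕ) :
    iteratedDeriv m (phi21 A Q B) 0 = ((Omega n * HMat A Q B) ^ m).toBlocks₂₁ :=
  iteratedDeriv_submatrix_exp_smul_zero _ Sum.inr Sum.inl m

theorem phi11_zero : phi11 A Q B 0 = 1 := by
  simpa [← fromBlocks_one] using iteratedDeriv_phi11_zero A Q B 0

theorem jacobiCurve_zero : jacobiCurve A Q B 0 = 0 := by
  have h : phi21 A Q B 0 = 0 := by
    simpa [← fromBlocks_one] using iteratedDeriv_phi21_zero A Q B 0
  simp [jacobiCurve, h]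

theorem contDiffAt_jacobiCurve : ContDiffAt ℝ ∞ (jacobiCurve A Q B) 0 := by
  have hinv : ContDiffAt ℝ ∞ (fun t => Ring.inverse (phi11 A Q B t)) 0 := by
    have := contDiffAt_ringInverse ℝ (n := ∞) (1 : (Matrix (Fin n) (Fin n) ℝ)ˣ)
    rw [Units.val_one, ← phi11_zero A Q B] at this
    exact this.comp 0 (contDiff_phi11 A Q B).contDiffAt
  unfold jacobiCurve
  simp_rw [nonsing_inv_eq_ringInverse]
  exact (contDiff_phi21 A Q B).contDiffAt.mul hinv

theorem phi21_eventuallyEq_jacobiCurve_mul_phi11 :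
    phi21 A Q B =ᶠ[𝓝 0] jacobiCurve A Q B * phi11 A Q B := by
  have hunit : ∀ᶠ t in 𝓝 0, IsUnit (phi11 A Q B t) :=
    (contDiff_phi11 A Q B).continuous.continuousAt.eventually
      (Units.isOpen.mem_nhds (by rw [phi11_zero]; exact isUnit_one))
  filter_upwards [hunit] with t ht
  simp [jacobiCurve, Matrix.mul_assoc, nonsing_inv_mul _ ((isUnit_iff_isUnit_det _).mp ht)]

theorem of_iteratedDeriv_jacobiCurve_apply (i : ℕ) :
    (of fun a b => iteratedDeriv i (fun s => jacobiCurve A Q B s a b) 0) =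
      iteratedDeriv i (jacobiCurve A Q B) 0 := by
  ext a b
  exact (entryLinearMap ℝ ℝ a b).toContinuousLinearMap.iteratedDeriv_comp_left
    ((contDiffAt_jacobiCurve A Q B).of_le (by exact_mod_cast le_top))

theorem toBlocks₂₁_pow_eq_sum (m : ℕ) :
    ((Omega n * HMat A Q B) ^ m).toBlocks₂₁ = ∑ j ∈ Finset.range (m + 1),
      m.choose j • (iteratedDeriv j (jacobiCurve A Q B) 0 *
        ((Omega n * HMat A Q B) ^ (m - j)).toBlocks₁₁) := by
  rw [← iteratedDeriv_phi21_zero,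
    (phi21_eventuallyEq_jacobiCurve_mul_phi11 A Q B).iteratedDeriv_eq,
    iteratedDeriv_mul ((contDiffAt_jacobiCurve A Q B).of_le (by exact_mod_cast le_top))
      ((contDiff_phi11 A Q B).contDiffAt.of_le (by exact_mod_cast le_top))]
  refine Finset.sum_congr rfl fun j _ => ?_
  rw [iteratedDeriv_phi11_zero, nsmul_eq_mul, Matrix.mul_assoc]

theorem forall_iteratedDeriv_jacobiCurve_mulVec_eq_zero_iff (hQ : Q.IsSymm) (p : Fin n → ℝ)
    (N : ℕ) :
    (∀ i, 1 ≤ i → i ≤ N →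
        (of fun a b => iteratedDeriv i (fun s => jacobiCurve A Q B s a b) 0) *ᵥ p = 0) ↔
      ∀ m < N, p ᵥ* (A ^ m * B) = 0 := by
  let d (j : ℕ) : Fin n → ℝ := p ᵥ* iteratedDeriv j (jacobiCurve A Q B) 0
  have hd (i : ℕ) :
      (of fun a b => iteratedDeriv i (fun s => jacobiCurve A Q B s a b) 0) *ᵥ p = d i := by
    rw [← (isSymm_of_iteratedDeriv_apply (isSymm_jacobiCurve A Q B hQ) i 0).eq, mulVec_transpose,
      of_iteratedDeriv_jacobiCurve_apply]
  have hd0 : d 0 = 0 := by simp [d, jacobiCurve_zero]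
  have hc (m : ℕ) : p ᵥ* ((Omega n * HMat A Q B) ^ m).toBlocks₂₁ = ∑ j ∈ Finset.range (m + 1),
      m.choose j • d j ᵥ* ((Omega n * HMat A Q B) ^ (m - j)).toBlocks₁₁ := by
    simp only [toBlocks₂₁_pow_eq_sum, vecMul_sum, vecMul_smul, vecMul_vecMul, d]
  have hE : ((Omega n * HMat A Q B) ^ 0).toBlocks₁₁ = 1 := by simp [← fromBlocks_one]
  simp only [hd]
  rw [← forall_vecMul_toBlocks₂₁_pow_eq_zero_iff A Q B p N,
    forall_le_eq_zero_iff_of_eq_sum_choose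
      (E := fun m => ((Omega n * HMat A Q B) ^ m).toBlocks₁₁) hE hc N]
  exact ⟨fun h m hm => m.eq_zero_or_pos.elim (· ▸ hd0) fun hm0 => h m hm0 hm,
    fun h i _ hi => h i hi⟩

end JacobiCurveDerivatives

theorem controllable_iff_jacobi_curve_ample_general {n k : ℕ}
    (A Q : Matrix (Fin n) (Fin n) ℝ) (hQ : Q.IsSymm) (B : Matrix (Fin n) (Fin k) ℝ)
    (S : ℝ → Matrix (Fin n) (Fin n) ℝ)
    (hS : ∀ t : ℝ, S t = phi21 A Q B t * (phi11 A Q B t)⁻¹) :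
    Controllable A B ↔
      ∃ N : ℕ, 1 ≤ N ∧ ∀ p : Fin n → ℝ, p ≠ 0 →
        ∃ i : ℕ, 1 ≤ i ∧ i ≤ N ∧
          (Matrix.of fun a b => iteratedDeriv i (fun s => S s a b) 0).mulVec p ≠ 0 := by
  obtain rfl : S = jacobiCurve A Q B := funext hS
  have key := forall_iteratedDeriv_jacobiCurve_mulVec_eq_zero_iff A Q B hQ
  rw [controllable_iff_forall_vecMul_pow_mul_eq_zero]
  constructor
  · intro hC
    refine ⟨n + 1, Nat.le_add_left 1 n, fun p hp => ?_⟩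
    by_contra! h
    exact hp (hC p fun m hm => (key p (n + 1)).mp h m (by omega))
  · rintro ⟨N, -, hN⟩ p hp
    by_contra hp0
    obtain ⟨i, hi1, hiN, hi⟩ := hN p hp0
    exact hi ((key p N).mpr (fun m _ => vecMul_pow_mul_eq_zero_of_forall_lt A B hp m) i hi1 hiN)

theorem controllable_iff_jacobi_curve_ample {n k : ℕ}
    (hn : 1 ≤ n) (hk : 1 ≤ k)
    (A Q : Matrix (Fin n) (Fin n) ℝ) (hQ : Q.IsSymm) (B : Matrix (Fin n) (Fin k) ℝ)
    (S : ℝ → Matrix (Fin n) (Fin n) ℝ)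
    (hS : ∀ t : ℝ, S t = phi21 A Q B t * (phi11 A Q B t)⁻¹) :
    Controllable A B ↔
      ∃ N : ℕ, 1 ≤ N ∧ ∀ p : Fin n → ℝ, p ≠ 0 →
        ∃ i : ℕ, 1 ≤ i ∧ i ≤ N ∧
          (Matrix.of fun a b => iteratedDeriv i (fun s => S s a b) 0).mulVec p ≠ 0 :=
  controllable_iff_jacobi_curve_ample_general A Q hQ B S hS
end
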